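/- arXiv:0909.3520 — 3 statements merged into one kernel-verified Lean document; each statement's English description precedes it below -/
import Mathlib

section
/- For every a ∈ ℝ^k, the minimum over x ∈ ℝ^k of E₁(a, x) equals (k(k−2)/(k²−k−1))·E₀(a), and this minimum is attained precisely at the point x given by x_i = ((k−1)·A − a_i)/(k²−k−1) for each i, where A = Σ_{j=0}^{k−1} a_j. (This solves the renormalization problem for the level-1 graph energy of K^{(k)} with all conductances equal to 1, giving renormalization factor r = k(k−2)/(k²−k−1).) -/
/-!
Write `D = k² - k - 1` and let `x*` be the claimed minimiser, so that `D x*ᵢ = (k - 1) A - aᵢ`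
and `Σ x*ᵢ = A`. Completing the square in `x` gives
`E₁(a, x) = r E₀(a) + (k - 2) E₀(x - x*) + (k - 1) Σ (xᵢ - x*ᵢ)²` with `r = k(k - 2)/D`;
for `k ≥ 2` the last two terms are nonnegative and vanish only at `x = x*`.
Via `E₀(y) = k Σ yᵢ² - (Σ yᵢ)²` the identity is a polynomial identity between the moments
`Σ xᵢ, Σ aᵢ, Σ xᵢ², Σ aᵢ², Σ xᵢ aᵢ`.
-/

namespace HanoiGeo

/-- `E₀(a) = Σ_{0 ≤ i < j ≤ k-1} (a_i - a_j)²`. -/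
def energy0 (k : ℕ) (a : Fin k → ℝ) : ℝ :=
  ∑ p ∈ Finset.univ.filter (fun p : Fin k × Fin k => p.1 < p.2), (a p.1 - a p.2) ^ 2

/-- `E₁(a, x) = (k-2) · Σ_{0 ≤ i < j ≤ k-1} (x_i - x_j)² + Σ_{i ≠ j} (x_i - a_j)²`,
the second sum running over ordered pairs of distinct indices. -/
def energy1 (k : ℕ) (a x : Fin k → ℝ) : ℝ :=
  (k - 2 : ℝ) * energy0 k x +
    ∑ p ∈ Finset.univ.filter (fun p : Fin k × Fin k => p.1 ≠ p.2), (x p.1 - a p.2) ^ 2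

end HanoiGeo

namespace Finset

variable {ι : Type*} [Fintype ι]

theorem sum_filter_ne_eq_sub [DecidableEq ι] {M : Type*} [AddCommGroup M] (g : ι × ι → M) :
    ∑ p ∈ univ.filter (fun p : ι × ι => p.1 ≠ p.2), g p = ∑ i, ∑ j, g (i, j) - ∑ i, g (i, i) := by
  rw [sum_filter, Fintype.sum_prod_type, ← sum_sub_distrib]
  refine sum_congr rfl fun i _ => ?_
  rw [← sum_filter, filter_ne, sum_erase_eq_sub (mem_univ i)]

theorem two_nsmul_sum_filter_lt [LinearOrder ι] {M : Type*} [AddCommMonoid M] (g : ι × ι → M)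
    (hg : ∀ i j, g (i, j) = g (j, i)) :
    2 • ∑ p ∈ univ.filter (fun p : ι × ι => p.1 < p.2), g p
      = ∑ p ∈ univ.filter (fun p : ι × ι => p.1 ≠ p.2), g p := by
  have hswap : ∑ p ∈ univ.filter (fun p : ι × ι => p.1 < p.2), g p
      = ∑ p ∈ univ.filter (fun p : ι × ι => p.2 < p.1), g p :=
    sum_equiv (Equiv.prodComm ι ι) (by simp) fun p _ => hg p.1 p.2
  rw [two_nsmul]
  nth_rw 2 [hswap]
  rw [← sum_union (disjoint_filter.2 fun p _ h h' => lt_asymm h h')]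
  congr 1
  ext p
  simp only [mem_union, mem_filter, mem_univ, true_and]
  exact lt_or_lt_iff_ne

variable {R : Type*} [CommRing R]

theorem sum_sum_sub_sq (u v : ι → R) :
    ∑ i, ∑ j, (u i - v j) ^ 2
      = Fintype.card ι * ∑ i, u i ^ 2 - 2 * (∑ i, u i) * ∑ j, v j
        + Fintype.card ι * ∑ j, v j ^ 2 := by
  simp only [sub_sq, sum_add_distrib, sum_sub_distrib, sum_const, card_univ, nsmul_eq_mul,
    mul_assoc, ← mul_sum, ← sum_mul]

theorem sum_filter_ne_sub_sq [DecidableEq ι] (u v : ι → R) :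
    ∑ p ∈ univ.filter (fun p : ι × ι => p.1 ≠ p.2), (u p.1 - v p.2) ^ 2
      = (Fintype.card ι - 1) * (∑ i, u i ^ 2 + ∑ i, v i ^ 2) - 2 * (∑ i, u i) * ∑ i, v i
        + 2 * ∑ i, u i * v i := by
  rw [sum_filter_ne_eq_sub (fun p : ι × ι => (u p.1 - v p.2) ^ 2), sum_sum_sub_sq]
  simp only [sub_sq, sum_add_distrib, sum_sub_distrib, mul_assoc, ← mul_sum]
  ring

theorem sum_filter_lt_sub_sq [LinearOrder ι] [IsDomain R] [CharZero R] (y : ι → R) :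
    ∑ p ∈ univ.filter (fun p : ι × ι => p.1 < p.2), (y p.1 - y p.2) ^ 2
      = Fintype.card ι * ∑ i, y i ^ 2 - (∑ i, y i) ^ 2 := by
  have h := two_nsmul_sum_filter_lt (fun p : ι × ι => (y p.1 - y p.2) ^ 2) fun i j => by ring
  simp only [sum_filter_ne_eq_sub, sum_sum_sub_sq, sub_self, two_nsmul, ne_eq,
    OfNat.ofNat_ne_zero, not_false_eq_true, zero_pow, sum_const_zero, sub_zero] at h
  refine mul_left_cancel₀ (two_ne_zero (α := R)) ?_
  linear_combination h

end Finset

namespace HanoiGeo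

open Finset

theorem energy0_eq (k : ℕ) (y : Fin k → ℝ) :
    energy0 k y = k * ∑ i, y i ^ 2 - (∑ i, y i) ^ 2 := by
  rw [energy0, sum_filter_lt_sub_sq, Fintype.card_fin]

theorem energy0_nonneg (k : ℕ) (y : Fin k → ℝ) : 0 ≤ energy0 k y :=
  sum_nonneg fun _ _ => sq_nonneg _

theorem cast_sq_sub_sub_one_ne_zero (k : ℕ) : (k : ℝ) ^ 2 - k - 1 ≠ 0 := by
  rcases Nat.lt_or_ge k 2 with hk | hk
  · interval_cases k <;> norm_num
  · have hk' : (2 : ℝ) ≤ k := by exact_mod_cast hk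
    nlinarith

noncomputable def renormFactor (k : ℕ) : ℝ := k * (k - 2) / (k ^ 2 - k - 1)

noncomputable def harmonicExt (k : ℕ) (a : Fin k → ℝ) : Fin k → ℝ :=
  fun i => ((k - 1) * ∑ j, a j - a i) / (k ^ 2 - k - 1)

noncomputable def energyGap (k : ℕ) (y : Fin k → ℝ) : ℝ :=
  (k - 2) * energy0 k y + (k - 1) * ∑ i, y i ^ 2

section

variable {k : ℕ}

theorem renormFactor_mul : renormFactor k * ((k : ℝ) ^ 2 - k - 1) = k * (k - 2) :=
  div_mul_cancel₀ _ (cast_sq_sub_sub_one_ne_zero k)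

theorem mul_harmonicExt (a : Fin k → ℝ) (i : Fin k) :
    ((k : ℝ) ^ 2 - k - 1) * harmonicExt k a i = (k - 1) * ∑ j, a j - a i :=
  mul_div_cancel₀ _ (cast_sq_sub_sub_one_ne_zero k)

theorem sum_harmonicExt (a : Fin k → ℝ) : ∑ i, harmonicExt k a i = ∑ i, a i := by
  refine mul_left_cancel₀ (cast_sq_sub_sub_one_ne_zero k) ?_
  rw [mul_sum]
  simp only [mul_harmonicExt, sum_sub_distrib, sum_const, card_univ, Fintype.card_fin, nsmul_eq_mul]
  ring

theorem sq_mul_sum_sub_harmonicExt_sq (a x : Fin k → ℝ) :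
    ((k : ℝ) ^ 2 - k - 1) ^ 2 * ∑ i, (x i - harmonicExt k a i) ^ 2
      = ((k : ℝ) ^ 2 - k - 1) ^ 2 * ∑ i, x i ^ 2
        - 2 * ((k : ℝ) ^ 2 - k - 1) * ((k - 1) * ∑ i, a i) * ∑ i, x i
        + 2 * ((k : ℝ) ^ 2 - k - 1) * ∑ i, x i * a i
        + k * ((k - 1) * ∑ i, a i) ^ 2 - 2 * ((k - 1) * ∑ i, a i) * ∑ i, a i + ∑ i, a i ^ 2 := by
  have hpt : ∀ i, ((k : ℝ) ^ 2 - k - 1) ^ 2 * (x i - harmonicExt k a i) ^ 2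
      = (((k : ℝ) ^ 2 - k - 1) * x i - ((k - 1) * ∑ j, a j - a i)) ^ 2 := by
    intro i
    rw [← mul_harmonicExt]
    ring
  rw [mul_sum, sum_congr rfl fun i _ => hpt i]
  simp only [sub_sq, mul_sub, sum_add_distrib, sum_sub_distrib, mul_pow, mul_assoc, ← mul_sum,
    ← sum_mul, sum_const, card_univ, Fintype.card_fin, nsmul_eq_mul]
  ring

theorem energy1_eq (a x : Fin k → ℝ) :
    energy1 k a x = renormFactor k * energy0 k a + energyGap k (x - harmonicExt k a) := by
  have hY := sq_mul_sum_sub_harmonicExt_sq a x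
  have hr := renormFactor_mul (k := k)
  refine mul_left_cancel₀ (pow_ne_zero 2 (cast_sq_sub_sub_one_ne_zero k)) ?_
  rw [energy1, energyGap, sum_filter_ne_sub_sq, Fintype.card_fin, energy0_eq, energy0_eq,
    energy0_eq]
  simp only [Pi.sub_apply, sum_sub_distrib, sum_harmonicExt]
  generalize ∑ i, (x i - harmonicExt k a i) ^ 2 = Y at hY ⊢
  linear_combination (-((k : ℝ) ^ 2 - k - 1)) * hY
    - ((k : ℝ) ^ 2 - k - 1) * (k * ∑ i, a i ^ 2 - (∑ i, a i) ^ 2) * hr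

variable (hk : 2 ≤ k)
include hk

theorem energyGap_nonneg (y : Fin k → ℝ) : 0 ≤ energyGap k y := by
  have hk' : (2 : ℝ) ≤ k := by exact_mod_cast hk
  exact add_nonneg (mul_nonneg (by linarith) (energy0_nonneg k y))
    (mul_nonneg (by linarith) (sum_nonneg fun _ _ => sq_nonneg _))

theorem energyGap_eq_zero_iff (y : Fin k → ℝ) : energyGap k y = 0 ↔ y = 0 := by
  refine ⟨fun h => ?_, fun h => by simp [h, energyGap, energy0]⟩
  have hk' : (2 : ℝ) ≤ k := by exact_mod_cast hk
  have hE := mul_nonneg (sub_nonneg.2 hk') (energy0_nonneg k y)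
  have hS : 0 ≤ ∑ i, y i ^ 2 := sum_nonneg fun _ _ => sq_nonneg _
  have hS0 : ∑ i, y i ^ 2 = 0 := by
    unfold energyGap at h
    nlinarith
  funext i
  exact pow_eq_zero_iff two_ne_zero |>.1 <|
    congrFun ((Fintype.sum_eq_zero_iff_of_nonneg fun i => sq_nonneg (y i)).1 hS0) i

end

/-- solution of the renormalization problem.
For every `a ∈ ℝ^k`, the minimum over `x ∈ ℝ^k` of `E₁(a, x)` equals
`(k(k-2)/(k²-k-1)) · E₀(a)`, and it is attained precisely at the point `x`
with `x_i = ((k-1)·A - a_i)/(k²-k-1)` where `A = Σ_j a_j`. -/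
theorem renormalization_problem {k : ℕ} (hk : 3 ≤ k) (a : Fin k → ℝ) :
    IsLeast (Set.range (energy1 k a))
      ((k : ℝ) * ((k : ℝ) - 2) / ((k : ℝ) ^ 2 - (k : ℝ) - 1) * energy0 k a) ∧
    ∀ x : Fin k → ℝ,
      energy1 k a x = (k : ℝ) * ((k : ℝ) - 2) / ((k : ℝ) ^ 2 - (k : ℝ) - 1) * energy0 k a ↔
        ∀ i : Fin k, x i = (((k : ℝ) - 1) * (∑ j, a j) - a i) / ((k : ℝ) ^ 2 - (k : ℝ) - 1) := by
  change IsLeast (Set.range (energy1 k a)) (renormFactor k * energy0 k a) ∧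
    ∀ x, energy1 k a x = renormFactor k * energy0 k a ↔ ∀ i, x i = harmonicExt k a i
  have hk2 : 2 ≤ k := by omega
  have key := energy1_eq (k := k) a
  refine ⟨⟨⟨harmonicExt k a, ?_⟩, ?_⟩, fun x => ?_⟩
  · rw [key, sub_self, (energyGap_eq_zero_iff hk2 0).2 rfl, add_zero]
  · rintro _ ⟨x, rfl⟩
    rw [key]
    exact le_add_of_nonneg_right (energyGap_nonneg hk2 _)
  · rw [key, add_eq_left, energyGap_eq_zero_iff hk2, sub_eq_zero, funext_iff]

end HanoiGeo
end

section
/- Let k ≥ 3 and let G be a fully symmetric k-peg Hanoi group with generating set S such that every non-identity element of S has at least one inactive peg. If G is contracting, then S ⊆ S_{k,1} ∪ {1}; in particular G is a subgroup of H_c^{(k)}. -/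
/-!
Common framework: automorphisms of the rooted tree `X_k^*`, root permutations,
sections, self-similar and contracting groups, Hanoi automorphisms and Hanoi
groups, following Makisumi–Stadnyk–Steinhurst, "Modified Hanoi Towers Groups
and Limit Spaces".

A word `x_n … x_1` over the alphabet `X_k = Fin k` is encoded as the list
`[x_n, …, x_1]`, whose head `x_n` is the first letter, i.e. the letter that a
tree automorphism reads (and permutes) first.
-/

namespace Hanoi

/-- Words over the alphabet `X_k = Fin k`. -/
abbrev Word (k : ℕ) := List (Fin k)

/-- `e` is an automorphism of the rooted tree `X_k^*`: it fixes the root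
(the empty word), preserves word length (levels) and preserves the tree
structure (words sharing an initial segment of length `n` are sent to words
sharing an initial segment of length `n`). -/
def IsTreeAut {k : ℕ} (e : Equiv.Perm (Word k)) : Prop :=
  (∀ w : Word k, (e w).length = w.length) ∧
    ∀ (w v : Word k) (n : ℕ), w.take n = v.take n → (e w).take n = (e v).take n

open Classical in
/-- The root permutation `σ_e` of a tree automorphism `e` (its action on
one-letter words). -/
noncomputable def rootPerm {k : ℕ} (e : Equiv.Perm (Word k)) : Equiv.Perm (Fin k) :=
  if h : Function.Bijective (fun x : Fin k => ((e [x]).head?.getD x)) then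
    Equiv.ofBijective _ h
  else 1

open Classical in
/-- The section `e|_x` of `e` at a letter `x`: the unique automorphism with
`e (x :: w) = σ_e x :: (e|_x) w` for all words `w`. -/
noncomputable def sec {k : ℕ} (e : Equiv.Perm (Word k)) (x : Fin k) : Equiv.Perm (Word k) :=
  if h : Function.Bijective (fun w : Word k => (e (x :: w)).tail) then
    Equiv.ofBijective _ h
  else 1

/-- The section `e|_v` of `e` at a word `v = x_n … x_1`, defined by
`e|_v = (e|_{x_n})|_{x_{n-1} … x_1}`. -/
noncomputable def secW {k : ℕ} (e : Equiv.Perm (Word k)) : Word k → Equiv.Perm (Word k)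
  | [] => e
  | x :: v => secW (sec e x) v

/-- A subgroup of the permutations of `X_k^*` is self-similar if it consists of
tree automorphisms and is closed under taking sections. -/
def IsSelfSimilar {k : ℕ} (G : Subgroup (Equiv.Perm (Word k))) : Prop :=
  (∀ g ∈ G, IsTreeAut g) ∧ ∀ g ∈ G, ∀ x : Fin k, sec g x ∈ G

/-- A self-similar group `G` is contracting if there is a finite subset `N ⊆ G`
such that for every `g ∈ G` all sections of `g` at words of length at least
some `m` lie in `N`. -/
def IsContracting {k : ℕ} (G : Subgroup (Equiv.Perm (Word k))) : Prop :=
  ∃ N : Set (Equiv.Perm (Word k)), N.Finite ∧ N ⊆ (G : Set (Equiv.Perm (Word k))) ∧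
    ∀ g ∈ G, ∃ m : ℕ, ∀ v : Word k, m ≤ v.length → secW g v ∈ N

/-- `N` is the nucleus of `G`: a smallest finite subset of `G` catching all
deep enough sections of every element of `G`. -/
def IsNucleus {k : ℕ} (G : Subgroup (Equiv.Perm (Word k)))
    (N : Set (Equiv.Perm (Word k))) : Prop :=
  (N.Finite ∧ N ⊆ (G : Set (Equiv.Perm (Word k))) ∧
    ∀ g ∈ G, ∃ m : ℕ, ∀ v : Word k, m ≤ v.length → secW g v ∈ N) ∧
  ∀ N' : Set (Equiv.Perm (Word k)), N'.Finite → N' ⊆ (G : Set (Equiv.Perm (Word k))) →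
    (∀ g ∈ G, ∃ m : ℕ, ∀ v : Word k, m ≤ v.length → secW g v ∈ N') → N ⊆ N'

/-- `a` is a Hanoi automorphism with set of inactive pegs `Q`: the section at
each active peg (element of the complement of `Q`) is trivial, the section at
each inactive peg is `a` itself, and the root permutation fixes each inactive
peg. -/
def IsHanoiWith {k : ℕ} (a : Equiv.Perm (Word k)) (Q : Set (Fin k)) : Prop :=
  IsTreeAut a ∧ (∀ i ∉ Q, sec a i = 1) ∧ (∀ j ∈ Q, sec a j = a) ∧
    ∀ j ∈ Q, rootPerm a j = j

/-- `a` is a `k`-peg Hanoi automorphism. -/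
def IsHanoiAut {k : ℕ} (a : Equiv.Perm (Word k)) : Prop := ∃ Q, IsHanoiWith a Q

open Classical in
/-- The set `Q_a` of inactive pegs of a Hanoi automorphism `a`; by convention
`Q_1 = X_k` (for `a ≠ 1` the set of inactive pegs is uniquely determined). -/
noncomputable def inactivePegs {k : ℕ} (a : Equiv.Perm (Word k)) : Set (Fin k) :=
  if a = 1 then Set.univ
  else if h : ∃ Q, IsHanoiWith a Q then h.choose else ∅

/-- `S_{k,q}`: the set of Hanoi automorphisms over `X_k` with exactly `q`
inactive pegs. -/
noncomputable def hanoiSet (k q : ℕ) : Set (Equiv.Perm (Word k)) :=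
  {a | IsHanoiAut a ∧ (inactivePegs a).ncard = q}

/-- `L = [s_n, …, s_1]` is a representation of `g` over the generating set `S`:
each `s_i ∈ S ∪ S⁻¹` and `g = s_n ⋯ s_2 s_1`. -/
def IsRepOf {k : ℕ} (S : Set (Equiv.Perm (Word k))) (L : List (Equiv.Perm (Word k)))
    (g : Equiv.Perm (Word k)) : Prop :=
  (∀ s ∈ L, s ∈ S ∨ s⁻¹ ∈ S) ∧ L.prod = g

/-- The length `l(g)` of `g` with respect to `S`: the length of a minimal
representation (`0` for the identity). -/
noncomputable def repLength {k : ℕ} (S : Set (Equiv.Perm (Word k)))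
    (g : Equiv.Perm (Word k)) : ℕ :=
  sInf {n | ∃ L, IsRepOf S L g ∧ L.length = n}

/-- The essential set of a representation: the intersection of the sets of
inactive pegs of its letters. -/
noncomputable def essSet {k : ℕ} (L : List (Equiv.Perm (Word k))) : Set (Fin k) :=
  ⋂ s ∈ L, inactivePegs s

/-- The prenucleus of `G`: the set of elements `g ∈ G` with `g|_j = g` for some
letter `j`. -/
noncomputable def preNucleus {k : ℕ} (G : Subgroup (Equiv.Perm (Word k))) :
    Set (Equiv.Perm (Word k)) :=
  {g | g ∈ G ∧ ∃ j : Fin k, sec g j = g}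

/-- The underlying function of the Hanoi Towers move `a_{ij}`: it changes the
first occurrence of `i` or `j` in a word by means of the transposition `(i j)`
and leaves the rest of the word unchanged. -/
def hanoiMoveFun {k : ℕ} (i j : Fin k) : Word k → Word k
  | [] => []
  | x :: w => if x = i ∨ x = j then Equiv.swap i j x :: w else x :: hanoiMoveFun i j w

theorem hanoiMoveFun_involutive {k : ℕ} (i j : Fin k) :
    Function.Involutive (hanoiMoveFun i j) := by
  intro w
  induction w with
  | nil => rfl
  | cons x t ih =>
    by_cases h : x = i ∨ x = j
    · have h2 : Equiv.swap i j x = i ∨ Equiv.swap i j x = j := by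
        rcases h with h | h <;> subst h <;> simp
      simp only [hanoiMoveFun, if_pos h, if_pos h2, Equiv.swap_apply_self]
    · simp only [hanoiMoveFun, if_neg h, ih]

/-- The Hanoi Towers move `a_{ij}`, as a permutation of `X_k^*`: its root
permutation is the transposition `(i j)`, its sections at `i` and `j` are
trivial and all its other sections equal `a_{ij}` itself. -/
def hanoiMove {k : ℕ} (i j : Fin k) : Equiv.Perm (Word k) :=
  (hanoiMoveFun_involutive i j).toPerm

/-- The orbit of the letter `j` under the subgroup of `Sym(X_k)` generated by
the root permutations of the elements of `T`. -/
noncomputable def orbT {k : ℕ} (T : Finset (Equiv.Perm (Word k))) (j : Fin k) : Set (Fin k) :=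
  MulAction.orbit (Subgroup.closure ((fun a => rootPerm a) '' (T : Set (Equiv.Perm (Word k))))) j

/-- The set `Fix(T)` of letters fixed by the root permutation of every element
of `T`. -/
noncomputable def fixT {k : ℕ} (T : Finset (Equiv.Perm (Word k))) : Set (Fin k) :=
  {x | ∀ s ∈ T, rootPerm s x = x}

/-- Condition (*) on a generating set `S` of Hanoi automorphisms: for every
finite `T ⊆ S` with nonempty essential set and every letter `j ∉ Fix(T)`,
the orbit of `j` misses the inactive pegs of some element of `T`. -/
noncomputable def CondStar {k : ℕ} (S : Set (Equiv.Perm (Word k))) : Prop :=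
  ∀ T : Finset (Equiv.Perm (Word k)), (T : Set (Equiv.Perm (Word k))) ⊆ S →
    (⋂ s ∈ T, inactivePegs s).Nonempty →
    ∀ j : Fin k, j ∉ fixT T →
      ∃ s ∈ T, orbT T j ∩ inactivePegs s = ∅

open Classical in
/-- `d(g)`: the least number of distinct generators occurring among all
representations of `g` having nonempty essential set. -/
noncomputable def dCount {k : ℕ} (S : Set (Equiv.Perm (Word k)))
    (g : Equiv.Perm (Word k)) : ℕ :=
  sInf {M | ∃ L, IsRepOf S L g ∧ (essSet L).Nonempty ∧ L.toFinset.card = M}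

/-- `S` is fully symmetric: for every non-identity `a ∈ S` and every
`φ ∈ Sym(X_k)`, the Hanoi automorphism `φ·a` with inactive pegs `φ(Q_a)` and
root permutation `φ ∘ σ_a ∘ φ⁻¹` again lies in `S`. -/
noncomputable def FullySymmetric {k : ℕ} (S : Set (Equiv.Perm (Word k))) : Prop :=
  ∀ a ∈ S, a ≠ 1 → ∀ φ : Equiv.Perm (Fin k), ∀ b : Equiv.Perm (Word k),
    IsHanoiWith b (φ '' inactivePegs a) →
    rootPerm b = φ * rootPerm a * φ⁻¹ → b ∈ S

/-- The family `R̲_{k,n}`: the identity together with all Hanoi automorphisms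
`a` such that (1) `Q_a ⊆ {m+1, …, m+n}` for some `m`, and (2) whenever
`i ∈ Q_a` the root permutation of `a` fixes `i-1, …, i-(n-1)`
(all peg labels mod `k`). -/
noncomputable def Runder (k n : ℕ) : Set (Equiv.Perm (Word k)) :=
  {a | a = 1 ∨ (IsHanoiAut a ∧
    (∃ m : Fin k, ∀ q ∈ inactivePegs a, ∃ t : ℕ, 1 ≤ t ∧ t ≤ n ∧
      (q : ℕ) = ((m : ℕ) + t) % k) ∧
    ∀ i ∈ inactivePegs a, ∀ x : Fin k, ∀ t : ℕ, 1 ≤ t → t ≤ n - 1 →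
      ((x : ℕ) + t) % k = (i : ℕ) → rootPerm a x = x)}

/-- The family `R̄_{k,n}`: the identity together with all Hanoi automorphisms
`a` such that (1) `Q_a ⊆ {m+1, …, m+n}` for some `m`, and (2) whenever
`i ∈ Q_a` the root permutation of `a` fixes `i+1, …, i+(n-1)`
(all peg labels mod `k`). -/
noncomputable def Rover (k n : ℕ) : Set (Equiv.Perm (Word k)) :=
  {a | a = 1 ∨ (IsHanoiAut a ∧
    (∃ m : Fin k, ∀ q ∈ inactivePegs a, ∃ t : ℕ, 1 ≤ t ∧ t ≤ n ∧
      (q : ℕ) = ((m : ℕ) + t) % k) ∧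
    ∀ i ∈ inactivePegs a, ∀ x : Fin k, ∀ t : ℕ, 1 ≤ t → t ≤ n - 1 →
      (x : ℕ) = ((i : ℕ) + t) % k → rootPerm a x = x)}

/-- The finite word `x_m … x_1` (first letter `x_m`) read off from a
left-infinite sequence `… x_2 x_1`, encoded as `x : ℕ → Fin k` with
`x s = x_{s+1}`. -/
def wordOf {k : ℕ} (x : ℕ → Fin k) (m : ℕ) : Word k := (List.range m).reverse.map x

/-!
Suppose a non-identity generator `a ∈ S` had two inactive pegs `j₁ ≠ j₂`. Pick a peg `t` moved by
`σ = σ_a` and put `p = σ t`, `q = σ p`. Full symmetry puts `b = φ·a` in `S` for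
`φ = (j₂ p)(q t)`, and then `c = a b` permutes `j₂ ↦ p ↦ q ↦ j₂` with sections `1, b, a` there,
so `c³|_{j₂} = a b = c`. An element returning as a section of its own power along a
non-trivial orbit has infinite order. But `j₁` is an inactive peg of both `a` and `b`, so `c` fixes
`j₁` with `c|_{j₁} = c`: every power of `c` is its own section at all words `j₁ⁿ`, and a
contracting group would need infinitely many elements in its nucleus.
-/

open Function

theorem _root_.Equiv.Perm.exists_fix_swap_swap {α : Type*} [DecidableEq α] {Q : Set α}
    {σ : Equiv.Perm α} (hσ : ∀ j ∈ Q, σ j = j) {j₁ j₂ t : α} (hj₁ : j₁ ∈ Q) (hj₂ : j₂ ∈ Q)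
    (hj : j₁ ≠ j₂) (ht : σ t ≠ t) :
    ∃ φ : Equiv.Perm α, φ j₁ = j₁ ∧ φ j₂ = σ t ∧ φ (σ t) = j₂ ∧ φ (σ (σ t)) = t ∧
      φ t = σ (σ t) := by
  have hp : σ (σ t) ≠ σ t := σ.injective.ne ht
  have ne_of_mem : ∀ {x y}, x ∈ Q → σ y ≠ y → x ≠ y := fun hx hy h => hy (hσ _ (h ▸ hx))
  refine ⟨Equiv.swap j₂ (σ t) * Equiv.swap (σ (σ t)) t, ?_, ?_, ?_, ?_, ?_⟩ <;>
    simp only [Equiv.Perm.mul_apply, Equiv.swap_apply_left, Equiv.swap_apply_right]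
  · rw [Equiv.swap_apply_of_ne_of_ne (ne_of_mem hj₁ (σ.injective.ne hp)) (ne_of_mem hj₁ ht),
      Equiv.swap_apply_of_ne_of_ne hj (ne_of_mem hj₁ hp)]
  · rw [Equiv.swap_apply_of_ne_of_ne (ne_of_mem hj₂ (σ.injective.ne hp)) (ne_of_mem hj₂ ht),
      Equiv.swap_apply_left]
  · rw [Equiv.swap_apply_of_ne_of_ne hp.symm ht, Equiv.swap_apply_right]
  · rw [Equiv.swap_apply_of_ne_of_ne (ne_of_mem hj₂ ht).symm ht.symm]
  · rw [Equiv.swap_apply_of_ne_of_ne (ne_of_mem hj₂ (σ.injective.ne hp)).symm hp]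

section

variable {k : ℕ} {e g h : Equiv.Perm (Word k)}

namespace IsTreeAut

theorem apply_singleton (he : IsTreeAut e) (x : Fin k) : e [x] = [rootPerm e x] := by
  set f : Fin k → Fin k := fun x => (e [x]).head?.getD x
  have hf : ∀ x, e [x] = [f x] := fun x => by
    obtain ⟨y, hy⟩ := List.length_eq_one_iff.1 (he.1 [x])
    simp [f, hy]
  have hinj : Injective f := fun x y hxy =>
    List.singleton_injective (e.injective (by rw [hf x, hf y, hxy]))
  rw [rootPerm, dif_pos (Finite.injective_iff_bijective.1 hinj)]
  exact hf x

theorem rootPerm_injective (he : IsTreeAut e) : Injective (rootPerm e) := fun x y hxy =>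
  List.singleton_injective (e.injective (by rw [he.apply_singleton x, he.apply_singleton y, hxy]))

theorem apply_cons_eq_cons_tail (he : IsTreeAut e) (x : Fin k) (w : Word k) :
    e (x :: w) = rootPerm e x :: (e (x :: w)).tail := by
  have htake : (e (x :: w)).take 1 = [rootPerm e x] := by
    rw [he.2 (x :: w) [x] 1 rfl, he.apply_singleton]
    rfl
  obtain ⟨y, l, hyl⟩ := List.exists_cons_of_length_pos (l := e (x :: w)) (by simp [he.1])
  rw [hyl] at htake ⊢
  simp_all

theorem apply_cons (he : IsTreeAut e) (x : Fin k) (w : Word k) :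
    e (x :: w) = rootPerm e x :: sec e x w := by
  have hbij : Bijective fun w : Word k => (e (x :: w)).tail := by
    refine ⟨fun w v hwv => ?_, fun u => ?_⟩
    · have : e (x :: w) = e (x :: v) := by
        rw [he.apply_cons_eq_cons_tail x w, he.apply_cons_eq_cons_tail x v]
        exact congrArg _ hwv
      simpa using e.injective this
    · obtain ⟨y, v, hyv⟩ := List.exists_cons_of_length_pos
        (l := e.symm (rootPerm e x :: u)) (by rw [← he.1, e.apply_symm_apply]; simp)
      have hy := he.apply_cons_eq_cons_tail y v
      rw [← hyv, e.apply_symm_apply] at hy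
      obtain rfl := he.rootPerm_injective (List.cons.inj hy).1.symm
      exact ⟨v, by simp [← hyv]⟩
  rw [sec, dif_pos hbij]
  exact he.apply_cons_eq_cons_tail x w

theorem rootPerm_and_sec_eq_of_apply_cons (he : IsTreeAut e) {x y : Fin k}
    {f : Equiv.Perm (Word k)} (hf : ∀ w, e (x :: w) = y :: f w) :
    rootPerm e x = y ∧ sec e x = f := by
  have hy : rootPerm e x = y := by
    have h0 := hf []
    rw [he.apply_cons] at h0
    exact (List.cons.inj h0).1
  refine ⟨hy, Equiv.ext fun w => ?_⟩
  simpa [he.apply_cons, hy] using hf w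

theorem one : IsTreeAut (1 : Equiv.Perm (Word k)) :=
  ⟨fun _ => rfl, fun _ _ _ hw => hw⟩

theorem mul (hg : IsTreeAut g) (hh : IsTreeAut h) : IsTreeAut (g * h) :=
  ⟨fun w => by simp [hg.1, hh.1], fun w v n hwv => hg.2 _ _ n (hh.2 w v n hwv)⟩

theorem pow (hg : IsTreeAut g) (n : ℕ) : IsTreeAut (g ^ n) := by
  induction n with
  | zero => exact one
  | succ n ih => rw [pow_succ]; exact ih.mul hg

end IsTreeAut

theorem rootPerm_one : rootPerm (1 : Equiv.Perm (Word k)) = 1 :=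
  Equiv.ext fun _ => (IsTreeAut.one.rootPerm_and_sec_eq_of_apply_cons (f := 1) fun _ => rfl).1

theorem sec_one (x : Fin k) : sec (1 : Equiv.Perm (Word k)) x = 1 :=
  (IsTreeAut.one.rootPerm_and_sec_eq_of_apply_cons (f := 1) (x := x) fun _ => rfl).2

namespace IsTreeAut

theorem rootPerm_mul (hg : IsTreeAut g) (hh : IsTreeAut h) :
    rootPerm (g * h) = rootPerm g * rootPerm h :=
  Equiv.ext fun x => ((hg.mul hh).rootPerm_and_sec_eq_of_apply_cons
    (f := sec g (rootPerm h x) * sec h x) fun w => by simp [hh.apply_cons, hg.apply_cons]).1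

theorem sec_mul (hg : IsTreeAut g) (hh : IsTreeAut h) (x : Fin k) :
    sec (g * h) x = sec g (rootPerm h x) * sec h x :=
  ((hg.mul hh).rootPerm_and_sec_eq_of_apply_cons (y := rootPerm g (rootPerm h x))
    fun w => by simp [hh.apply_cons, hg.apply_cons]).2

theorem rootPerm_pow (hg : IsTreeAut g) (n : ℕ) : rootPerm (g ^ n) = rootPerm g ^ n := by
  induction n with
  | zero => rw [pow_zero, pow_zero, rootPerm_one]
  | succ n ih => rw [pow_succ, (hg.pow n).rootPerm_mul hg, ih, pow_succ]

theorem sec_pow (hg : IsTreeAut g) {x : Fin k} (hx : rootPerm g x = x) (n : ℕ) :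
    sec (g ^ n) x = sec g x ^ n := by
  induction n with
  | zero => rw [pow_zero, pow_zero, sec_one]
  | succ n ih => rw [pow_succ, (hg.pow n).sec_mul hg, hx, ih, pow_succ]

theorem not_isOfFinOrder_of_sec_pow_minimalPeriod {c : Equiv.Perm (Word k)}
    (hc : IsTreeAut c) {u : Fin k} (hu : ¬IsFixedPt (rootPerm c) u)
    (hsec : sec (c ^ minimalPeriod (rootPerm c) u) u = c) : ¬IsOfFinOrder c := by
  intro hfin
  set ℓ := minimalPeriod (rootPerm c) u
  have hn := hfin.orderOf_pos
  have hper : IsPeriodicPt (rootPerm c) (orderOf c) u := by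
    rw [IsPeriodicPt, IsFixedPt, ← Equiv.Perm.coe_pow, ← hc.rootPerm_pow, pow_orderOf_eq_one,
      rootPerm_one, Equiv.Perm.one_apply]
  obtain ⟨s, hs⟩ := hper.minimalPeriod_dvd
  have hℓ : 1 < ℓ := by
    have := hper.minimalPeriod_pos hn
    have : ℓ ≠ 1 := fun h => hu (minimalPeriod_eq_one_iff_isFixedPt.1 h)
    omega
  have hℓfix : rootPerm (c ^ ℓ) u = u := by
    rw [hc.rootPerm_pow, Equiv.Perm.coe_pow]
    exact isPeriodicPt_minimalPeriod _ _
  -- `c ^ orderOf c = 1` has trivial sections, yet its section at `u` is `c ^ s`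
  have hcs : c ^ s = 1 := by
    calc c ^ s = sec (c ^ ℓ) u ^ s := by rw [hsec]
      _ = sec ((c ^ ℓ) ^ s) u := ((hc.pow ℓ).sec_pow hℓfix s).symm
      _ = 1 := by rw [← pow_mul, ← hs, pow_orderOf_eq_one, sec_one]
  have hs0 : 0 < s := Nat.pos_of_mul_pos_left (hs ▸ hn)
  have := Nat.le_of_dvd hs0 (orderOf_dvd_of_pow_eq_one hcs)
  nlinarith

theorem not_isOfFinOrder_of_three_cycle {c : Equiv.Perm (Word k)} (hc : IsTreeAut c)
    {u v w : Fin k} (huv : rootPerm c u = v) (hvw : rootPerm c v = w) (hwu : rootPerm c w = u)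
    (hvu : v ≠ u) (hsec : sec c w * sec c v * sec c u = c) : ¬IsOfFinOrder c := by
  have hu : ¬IsFixedPt (rootPerm c) u := by rwa [IsFixedPt, huv]
  have hper : IsPeriodicPt (rootPerm c) 3 u := by
    simp [IsPeriodicPt, IsFixedPt, huv, hvw, hwu]
  refine hc.not_isOfFinOrder_of_sec_pow_minimalPeriod hu ?_
  rw [minimalPeriod_eq_prime hper hu, pow_succ, pow_two, (hc.mul hc).sec_mul hc,
    hc.sec_mul hc, huv, hvw, hsec]

end IsTreeAut

theorem secW_replicate {g : Equiv.Perm (Word k)} {j : Fin k} (hj : sec g j = g) (n : ℕ) :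
    secW g (List.replicate n j) = g := by
  induction n with
  | zero => rfl
  | succ n ih => rw [List.replicate_succ, secW, hj, ih]

open Classical in
noncomputable def hanoiFun (Q : Set (Fin k)) (σ : Equiv.Perm (Fin k)) : Word k → Word k
  | [] => []
  | x :: w => if x ∈ Q then x :: hanoiFun Q σ w else σ x :: w

section hanoiAut

variable {Q : Set (Fin k)} {σ : Equiv.Perm (Fin k)}

theorem hanoiFun_leftInverse (hσ : ∀ j ∈ Q, σ j = j) :
    LeftInverse (hanoiFun Q σ⁻¹) (hanoiFun Q σ) := by
  intro w
  induction w with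
  | nil => rfl
  | cons x w ih =>
    by_cases hx : x ∈ Q
    · simp [hanoiFun, hx, ih]
    · have hσx : σ x ∉ Q := fun h => hx (σ.injective (hσ _ h) ▸ h)
      simp [hanoiFun, hx, hσx]

theorem length_hanoiFun (w : Word k) : (hanoiFun Q σ w).length = w.length := by
  induction w with
  | nil => rfl
  | cons x w ih => by_cases hx : x ∈ Q <;> simp [hanoiFun, hx, ih]

theorem take_hanoiFun (w : Word k) (n : ℕ) :
    (hanoiFun Q σ w).take n = hanoiFun Q σ (w.take n) := by
  induction w generalizing n with
  | nil => simp [hanoiFun]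
  | cons x w ih => cases n <;> by_cases hx : x ∈ Q <;> simp [hanoiFun, hx, ih]

noncomputable def hanoiAut (Q : Set (Fin k)) (σ : Equiv.Perm (Fin k))
    (hσ : ∀ j ∈ Q, σ j = j) : Equiv.Perm (Word k) where
  toFun := hanoiFun Q σ
  invFun := hanoiFun Q σ⁻¹
  left_inv := hanoiFun_leftInverse hσ
  right_inv := by
    simpa [RightInverse] using
      hanoiFun_leftInverse (σ := σ⁻¹) fun j hj => Equiv.Perm.inv_eq_iff_eq.2 (hσ j hj).symm

variable (hσ : ∀ j ∈ Q, σ j = j)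

theorem isTreeAut_hanoiAut : IsTreeAut (hanoiAut Q σ hσ) :=
  ⟨length_hanoiFun, fun w v n hwv => by
    simp only [hanoiAut, Equiv.coe_fn_mk, take_hanoiFun, hwv]⟩

theorem isHanoiWith_hanoiAut : IsHanoiWith (hanoiAut Q σ hσ) Q := by
  refine ⟨isTreeAut_hanoiAut hσ, fun i hi => ?_, fun j hj => ?_, fun j hj => ?_⟩
  · exact ((isTreeAut_hanoiAut hσ).rootPerm_and_sec_eq_of_apply_cons (y := σ i)
      fun w => by simp [hanoiAut, hanoiFun, hi]).2
  · exact ((isTreeAut_hanoiAut hσ).rootPerm_and_sec_eq_of_apply_cons (y := j)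
      fun w => by simp [hanoiAut, hanoiFun, hj]).2
  · exact ((isTreeAut_hanoiAut hσ).rootPerm_and_sec_eq_of_apply_cons (f := hanoiAut Q σ hσ)
      fun w => by simp [hanoiAut, hanoiFun, hj]).1

theorem rootPerm_hanoiAut : rootPerm (hanoiAut Q σ hσ) = σ := Equiv.ext fun x => by
  by_cases hx : x ∈ Q
  · rw [(isHanoiWith_hanoiAut hσ).2.2.2 x hx, hσ x hx]
  · exact ((isTreeAut_hanoiAut hσ).rootPerm_and_sec_eq_of_apply_cons (f := 1)
      fun w => by simp [hanoiAut, hanoiFun, hx]).1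

end hanoiAut

theorem IsHanoiWith.eq_one_of_rootPerm_eq_one {a : Equiv.Perm (Word k)} {Q : Set (Fin k)}
    (ha : IsHanoiWith a Q) (hσ : rootPerm a = 1) : a = 1 := by
  ext1 w
  induction w with
  | nil => exact List.eq_nil_of_length_eq_zero (ha.1.1 [])
  | cons x w ih =>
    rw [ha.1.apply_cons, hσ]
    by_cases hx : x ∈ Q
    · simpa [ha.2.2.1 x hx] using ih
    · simp [ha.2.1 x hx]

theorem IsHanoiAut.isHanoiWith_inactivePegs {a : Equiv.Perm (Word k)} (ha : IsHanoiAut a)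
    (ha1 : a ≠ 1) : IsHanoiWith a (inactivePegs a) := by
  rw [inactivePegs, if_neg ha1, dif_pos (show ∃ Q, IsHanoiWith a Q from ha)]
  exact ha.choose_spec

theorem IsHanoiWith.rootPerm_mul_and_sec_mul_of_mem {a b : Equiv.Perm (Word k)}
    {Q R : Set (Fin k)} (ha : IsHanoiWith a Q) (hb : IsHanoiWith b R) {j : Fin k} (hjQ : j ∈ Q)
    (hjR : j ∈ R) : rootPerm (a * b) j = j ∧ sec (a * b) j = a * b := by
  rw [ha.1.rootPerm_mul hb.1, Equiv.Perm.mul_apply, ha.1.sec_mul hb.1, hb.2.2.2 j hjR,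
    hb.2.2.1 j hjR, ha.2.2.1 j hjQ]
  exact ⟨ha.2.2.2 j hjQ, rfl⟩

theorem FullySymmetric.exists_smul_mem {S : Set (Equiv.Perm (Word k))} (hsym : FullySymmetric S)
    {a : Equiv.Perm (Word k)} (ha : a ∈ S) (ha1 : a ≠ 1)
    (hQ : IsHanoiWith a (inactivePegs a)) (φ : Equiv.Perm (Fin k)) :
    ∃ b ∈ S, IsHanoiWith b (φ '' inactivePegs a) ∧ rootPerm b = φ * rootPerm a * φ⁻¹ := by
  have hfix : ∀ j ∈ φ '' inactivePegs a, (φ * rootPerm a * φ⁻¹) j = j := by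
    rintro _ ⟨j, hj, rfl⟩
    simp [hQ.2.2.2 j hj]
  have hb := isHanoiWith_hanoiAut hfix
  exact ⟨_, hsym a ha ha1 φ _ hb (rootPerm_hanoiAut hfix), hb, rootPerm_hanoiAut hfix⟩

theorem IsContracting.isOfFinOrder_of_sec_eq_self {G : Subgroup (Equiv.Perm (Word k))}
    (hG : IsContracting G) {g : Equiv.Perm (Word k)} (hg : g ∈ G) (hgt : IsTreeAut g) {j : Fin k}
    (hj : rootPerm g j = j) (hs : sec g j = g) : IsOfFinOrder g := by
  obtain ⟨N, hN, -, hNsec⟩ := hG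
  by_contra hinf
  refine Set.infinite_range_of_injective (injective_pow_iff_not_isOfFinOrder.2 hinf)
    (hN.subset ?_)
  rintro _ ⟨n, rfl⟩
  obtain ⟨m, hm⟩ := hNsec _ (pow_mem hg n)
  simpa [secW_replicate (by rw [hgt.sec_pow hj, hs] : sec (g ^ n) j = g ^ n)]
    using hm (List.replicate m j) (by simp)

theorem IsHanoiWith.exists_not_isOfFinOrder_mul {a : Equiv.Perm (Word k)} {Q : Set (Fin k)}
    (ha : IsHanoiWith a Q) (ha1 : a ≠ 1) (hQ : 1 < Q.ncard) :
    ∃ φ : Equiv.Perm (Fin k), (Q ∩ φ '' Q).Nonempty ∧ ∀ b : Equiv.Perm (Word k),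
      IsHanoiWith b (φ '' Q) → rootPerm b = φ * rootPerm a * φ⁻¹ → ¬IsOfFinOrder (a * b) := by
  have ⟨haT, ha_act, ha_inact, ha_fix⟩ := ha
  obtain ⟨j₁, j₂, hj₁, hj₂, hj⟩ := (Set.one_lt_ncard_iff Q.toFinite).1 hQ
  set σ := rootPerm a
  obtain ⟨t, ht⟩ : ∃ t, σ t ≠ t :=
    not_forall.1 fun h => ha1 (ha.eq_one_of_rootPerm_eq_one (Equiv.ext h))
  obtain ⟨φ, hφj₁, hφj₂, hφp, hφq, hφt⟩ := Equiv.Perm.exists_fix_swap_swap ha_fix hj₁ hj₂ hj ht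
  set p := σ t
  set q := σ p
  have hp : σ p ≠ p := σ.injective.ne ht
  have not_mem : ∀ {x}, σ x ≠ x → x ∉ Q := fun hx hxQ => hx (ha_fix _ hxQ)
  have htQ := not_mem ht
  have hpQ := not_mem hp
  refine ⟨φ, ⟨j₁, hj₁, j₁, hj₁, hφj₁⟩, fun b hb hσb => ?_⟩
  obtain ⟨hbT, hb_act, hb_inact, -⟩ := hb
  have hσb' : ∀ x, rootPerm b (φ x) = φ (σ x) := fun x => by simp [hσb]
  have hbj₂ : rootPerm b j₂ = t := by rw [← hφp, hσb', hφq]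
  have hbp : rootPerm b p = p := by rw [← hφj₂, hσb', ha_fix j₂ hj₂]
  have hbq : rootPerm b q = j₂ := by rw [← hφt, hσb', hφp]
  have hj₂b : j₂ ∉ φ '' Q := fun ⟨x, hx, hφx⟩ => hpQ (φ.injective (hφx.trans hφp.symm) ▸ hx)
  have hqb : q ∉ φ '' Q := fun ⟨x, hx, hφx⟩ => htQ (φ.injective (hφx.trans hφt.symm) ▸ hx)
  have hroot : ∀ x, rootPerm (a * b) x = σ (rootPerm b x) := fun x => by
    rw [haT.rootPerm_mul hbT, Equiv.Perm.mul_apply]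
  refine (haT.mul hbT).not_isOfFinOrder_of_three_cycle (u := j₂) (v := p) (w := q)
    (by rw [hroot, hbj₂]) (by rw [hroot, hbp]) (by rw [hroot, hbq, ha_fix j₂ hj₂])
    (fun h => hpQ (h ▸ hj₂)) ?_
  -- the sections of `a * b` at `q`, `p`, `j₂` are `a`, `b`, `1`
  simp only [haT.sec_mul hbT, hbj₂, hbp, hbq, ha_inact j₂ hj₂, hb_act q hqb, ha_act p hpQ,
    hb_inact p ⟨j₂, hj₂, hφj₂⟩, ha_act t htQ, hb_act j₂ hj₂b, mul_one, one_mul]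

theorem FullySymmetric.ncard_inactivePegs_le_one {S : Set (Equiv.Perm (Word k))}
    (hsym : FullySymmetric S) (hc : IsContracting (Subgroup.closure S))
    {a : Equiv.Perm (Word k)} (ha : a ∈ S) (ha1 : a ≠ 1) (haH : IsHanoiAut a) :
    (inactivePegs a).ncard ≤ 1 := by
  have hQa := haH.isHanoiWith_inactivePegs ha1
  by_contra! hQ
  obtain ⟨φ, ⟨j, hjQ, hjφ⟩, hφ⟩ := hQa.exists_not_isOfFinOrder_mul ha1 hQ
  obtain ⟨b, hbS, hb, hσb⟩ := hsym.exists_smul_mem ha ha1 hQa φ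
  have habG : a * b ∈ Subgroup.closure S :=
    mul_mem (Subgroup.subset_closure ha) (Subgroup.subset_closure hbS)
  obtain ⟨hroot, hsec⟩ := hQa.rootPerm_mul_and_sec_mul_of_mem hb hjQ hjφ
  exact hφ b hb hσb (hc.isOfFinOrder_of_sec_eq_self habG (hQa.1.mul hb.1) hroot hsec)

end

theorem fully_symmetric_contracting_subgroup_Hc_general {k : ℕ}
    (S : Set (Equiv.Perm (Word k)))
    (hS : ∀ a ∈ S, IsHanoiAut a)
    (hQ : ∀ a ∈ S, a ≠ 1 → (inactivePegs a).Nonempty)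
    (hsym : FullySymmetric S)
    (hc : IsContracting (Subgroup.closure S)) :
    S ⊆ hanoiSet k 1 ∪ {1} ∧
      Subgroup.closure S ≤ Subgroup.closure (hanoiSet k 1 ∪ {1}) := by
  have hsub : S ⊆ hanoiSet k 1 ∪ {1} := by
    intro a ha
    by_cases ha1 : a = 1
    · exact Or.inr ha1
    refine Or.inl ⟨hS a ha, le_antisymm ?_ ((Set.ncard_pos (Set.toFinite _)).2 (hQ a ha ha1))⟩
    exact hsym.ncard_inactivePegs_le_one hc ha ha1 (hS a ha)
  exact ⟨hsub, Subgroup.closure_mono hsub⟩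

/-- Theorem: `H_c^{(k)}` is the unique maximal fully
symmetric contracting Hanoi group.
Let `k ≥ 3` and let `G` be a fully symmetric `k`-peg Hanoi group whose
non-identity generators all have at least one inactive peg.  If `G` is
contracting then every generator lies in `S_{k,1} ∪ {1}`; in particular `G`
is a subgroup of `H_c^{(k)}`. -/
theorem fully_symmetric_contracting_subgroup_Hc {k : ℕ} (hk : 3 ≤ k)
    (S : Set (Equiv.Perm (Word k)))
    (hS1 : (1 : Equiv.Perm (Word k)) ∈ S) (hS : ∀ a ∈ S, IsHanoiAut a)
    (hQ : ∀ a ∈ S, a ≠ 1 → (inactivePegs a).Nonempty)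
    (hsym : FullySymmetric S)
    (hc : IsContracting (Subgroup.closure S)) :
    S ⊆ hanoiSet k 1 ∪ {1} ∧
      Subgroup.closure S ≤ Subgroup.closure (hanoiSet k 1 ∪ {1}) :=
  fully_symmetric_contracting_subgroup_Hc_general S hS hQ hsym hc

end Hanoi
end

section
/- Let k ≥ 3. Two distinct left-infinite sequences …x_2x_1 and …y_2y_1 in X_k^{−ω} are asymptotically equivalent with respect to H_c^{(k)} if and only if there exist pairwise distinct i, j, l ∈ X_k and an integer r ≥ 0 such that x_s = y_s for all s ≤ r, {x_{r+1}, y_{r+1}} = {i, j}, and x_s = y_s = l for all s ≥ r+2. -/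
/-!
Common framework: automorphisms of the rooted tree `X_k^*`, root permutations,
sections, self-similar and contracting groups, Hanoi automorphisms and Hanoi
groups, following Makisumi–Stadnyk–Steinhurst, "Modified Hanoi Towers Groups
and Limit Spaces".

A word `x_n … x_1` over the alphabet `X_k = Fin k` is encoded as the list
`[x_n, …, x_1]`, whose head `x_n` is the first letter, i.e. the letter that a
tree automorphism reads (and permutes) first.
-/

namespace Hanoi

/-!
Every element of `H_c^{(k)}` is a product of generators `genAct l σ`, each of which skips the
leading run of its inactive peg `l` and applies `σ` to the first other letter. The section of a
product of `n` generators at a letter is a subproduct; along a word it can shrink at most `n`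
times, and once it stops shrinking all its inactive pegs equal the letter just read, after which
it survives only while that letter repeats. So if elements of bounded length carry `x_m … x_1`
to `y_m … y_1` and the sequences differ, `x` is eventually constant `l` and the relevant sections
act as a single generator with inactive peg `l`, which changes exactly the first letter other
than `l`. Conversely, the generator with inactive peg `l` and root permutation `(i j)` realises
every such pair.
-/

section TreeAut

variable {k : ℕ} {e : Equiv.Perm (Word k)}

theorem IsTreeAut.apply_nil (he : IsTreeAut e) : e [] = [] :=
  List.length_eq_zero_iff.mp (he.1 [])

theorem IsTreeAut.apply_cons_eq_cons_tail_s19 (he : IsTreeAut e) (x : Fin k) (w : Word k) :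
    e (x :: w) = (e [x]).head?.getD x :: (e (x :: w)).tail := by
  obtain ⟨a, t, hat⟩ := List.exists_cons_of_length_eq_add_one (he.1 (x :: w))
  obtain ⟨b, hb⟩ := List.length_eq_one_iff.mp (he.1 [x])
  have hab : (e (x :: w)).take 1 = (e [x]).take 1 := he.2 _ _ 1 rfl
  rw [hat, hb] at hab
  rw [hat, hb, (List.cons_eq_cons.mp hab).1]
  rfl

theorem IsTreeAut.apply_singleton_s19 (he : IsTreeAut e) (x : Fin k) :
    e [x] = [(e [x]).head?.getD x] := by
  have htail : (e [x]).tail = [] := by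
    rw [← List.length_eq_zero_iff, List.length_tail, he.1]
    rfl
  simpa only [htail] using he.apply_cons_eq_cons_tail_s19 x []

theorem IsTreeAut.bijective_root (he : IsTreeAut e) :
    Function.Bijective fun x : Fin k => (e [x]).head?.getD x :=
  Finite.injective_iff_bijective.mp fun a b hab => by
    have h : e [a] = e [b] := by
      rw [he.apply_singleton_s19 a, he.apply_singleton_s19 b]
      exact congrArg (· :: []) hab
    simpa using e.injective h

theorem IsTreeAut.rootPerm_apply (he : IsTreeAut e) (x : Fin k) :
    rootPerm e x = (e [x]).head?.getD x := by
  rw [rootPerm, dif_pos he.bijective_root]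
  rfl

theorem IsTreeAut.bijective_tail (he : IsTreeAut e) (x : Fin k) :
    Function.Bijective fun w : Word k => (e (x :: w)).tail := by
  refine ⟨fun w w' h => ?_, fun u => ?_⟩
  · have h' : e (x :: w) = e (x :: w') := by
      rw [he.apply_cons_eq_cons_tail_s19 x w, he.apply_cons_eq_cons_tail_s19 x w']
      exact congrArg _ h
    simpa using e.injective h'
  · set c := (e [x]).head?.getD x
    obtain ⟨a, t, hat⟩ := List.exists_cons_of_length_eq_add_one
      (by rw [← he.1, e.apply_symm_apply]; rfl : (e.symm (c :: u)).length = u.length + 1)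
    have h := he.apply_cons_eq_cons_tail_s19 a t
    rw [← hat, e.apply_symm_apply] at h
    have hax : a = x := he.bijective_root.1 (List.cons_eq_cons.mp h).1.symm
    refine ⟨t, ?_⟩
    show (e (x :: t)).tail = u
    rw [← hax, ← hat, e.apply_symm_apply]
    rfl

theorem IsTreeAut.sec_apply (he : IsTreeAut e) (x : Fin k) (w : Word k) :
    sec e x w = (e (x :: w)).tail := by
  rw [sec, dif_pos (he.bijective_tail x)]
  rfl

theorem IsTreeAut.apply_cons_s19 (he : IsTreeAut e) (x : Fin k) (w : Word k) :
    e (x :: w) = rootPerm e x :: sec e x w := by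
  rw [he.rootPerm_apply, he.sec_apply]
  exact he.apply_cons_eq_cons_tail_s19 x w

end TreeAut

section SinglePeg

variable {k : ℕ}

/-- The action of the Hanoi automorphism with the single inactive peg `l` and root
permutation `σ`. -/
def genAct (l : Fin k) (σ : Equiv.Perm (Fin k)) : Word k → Word k
  | [] => []
  | x :: w => if x = l then x :: genAct l σ w else σ x :: w

theorem genAct_cons (l : Fin k) (σ : Equiv.Perm (Fin k)) (x : Fin k) (w : Word k) :
    genAct l σ (x :: w) = if x = l then x :: genAct l σ w else σ x :: w := rfl

theorem length_genAct (l : Fin k) (σ : Equiv.Perm (Fin k)) :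
    ∀ w : Word k, (genAct l σ w).length = w.length
  | [] => rfl
  | x :: w => by
    by_cases hx : x = l <;> simp [genAct_cons, hx, length_genAct l σ w]

theorem take_genAct (l : Fin k) (σ : Equiv.Perm (Fin k)) :
    ∀ (w : Word k) (n : ℕ), (genAct l σ w).take n = genAct l σ (w.take n)
  | [], _ => by simp [genAct]
  | _ :: _, 0 => rfl
  | x :: w, n + 1 => by
    by_cases hx : x = l <;> simp [genAct_cons, hx, take_genAct l σ w n]

theorem genAct_one (l : Fin k) : genAct l 1 = id := by
  funext w
  induction w with
  | nil => rfl
  | cons x w ih => by_cases hx : x = l <;> simp [genAct_cons, hx, ih]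

theorem genAct_genAct {l : Fin k} (σ : Equiv.Perm (Fin k)) {τ : Equiv.Perm (Fin k)}
    (hτ : τ l = l) (w : Word k) : genAct l σ (genAct l τ w) = genAct l (σ * τ) w := by
  induction w with
  | nil => rfl
  | cons x w ih =>
    by_cases hx : x = l
    · simp [genAct_cons, hx, ih]
    · have hτx : τ x ≠ l := fun h => hx (τ.injective (h.trans hτ.symm))
      simp [genAct_cons, hx, hτx]

def genPerm (l : Fin k) (σ : Equiv.Perm (Fin k)) (hσ : σ l = l) : Equiv.Perm (Word k) where
  toFun := genAct l σ
  invFun := genAct l σ⁻¹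
  left_inv w := by rw [genAct_genAct _ hσ, inv_mul_cancel, genAct_one]; rfl
  right_inv w := by
    rw [genAct_genAct _ (Equiv.Perm.inv_eq_iff_eq.mpr hσ.symm), mul_inv_cancel, genAct_one]; rfl

theorem genPerm_apply (l : Fin k) (σ : Equiv.Perm (Fin k)) (hσ : σ l = l) (w : Word k) :
    genPerm l σ hσ w = genAct l σ w := rfl

theorem isHanoiWith_genPerm (l : Fin k) (σ : Equiv.Perm (Fin k)) (hσ : σ l = l) :
    IsHanoiWith (genPerm l σ hσ) {l} := by
  have ht : IsTreeAut (genPerm l σ hσ) :=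
    ⟨length_genAct l σ, fun w v n h => by
      simp only [genPerm_apply, take_genAct, h]⟩
  refine ⟨ht, fun i hi => Equiv.ext fun w => ?_, fun j hj => Equiv.ext fun w => ?_, fun j hj => ?_⟩
  · rw [ht.sec_apply, genPerm_apply, genAct_cons, if_neg (Set.mem_singleton_iff.not.mp hi)]
    rfl
  · rw [Set.mem_singleton_iff.mp hj, ht.sec_apply, genPerm_apply, genAct_cons, if_pos rfl]
    rfl
  · rw [Set.mem_singleton_iff.mp hj, ht.rootPerm_apply, genPerm_apply, genAct_cons, if_pos rfl]
    rfl

end SinglePeg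

section HanoiSet

variable {k : ℕ}

theorem IsHanoiWith.inactivePegs_eq {a : Equiv.Perm (Word k)} {Q : Set (Fin k)}
    (h : IsHanoiWith a Q) (ha : a ≠ 1) : inactivePegs a = Q := by
  have hex : ∃ Q, IsHanoiWith a Q := ⟨Q, h⟩
  rw [inactivePegs, if_neg ha, dif_pos hex]
  -- a peg inactive for one choice and active for the other would give `a = a|_j = 1`
  ext j
  constructor
  · intro hj
    by_contra hjQ
    exact ha ((hex.choose_spec.2.2.1 j hj).symm.trans (h.2.1 j hjQ))
  · intro hj
    by_contra hj'
    exact ha ((h.2.2.1 j hj).symm.trans (hex.choose_spec.2.1 j hj'))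

theorem IsHanoiWith.coe_eq_genAct {a : Equiv.Perm (Word k)} {l : Fin k}
    (h : IsHanoiWith a {l}) : ⇑a = genAct l (rootPerm a) := by
  funext w
  induction w with
  | nil => exact h.1.apply_nil
  | cons x w ih =>
    rw [h.1.apply_cons_s19, genAct_cons]
    split_ifs with hx
    · subst hx
      rw [h.2.2.2 x rfl, h.2.2.1 x rfl, ih]
    · rw [h.2.1 x hx]
      rfl

theorem exists_genAct_of_mem_hanoiSet_one {a : Equiv.Perm (Word k)} (ha : a ∈ hanoiSet k 1) :
    ∃ (l : Fin k) (σ : Equiv.Perm (Fin k)), σ l = l ∧ ⇑a = genAct l σ := by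
  obtain ⟨⟨Q, hQ⟩, hcard⟩ := ha
  obtain ⟨l, hl⟩ := Set.ncard_eq_one.mp hcard
  by_cases ha1 : a = 1
  · exact ⟨l, 1, rfl, by rw [ha1, genAct_one]; rfl⟩
  · rw [hQ.inactivePegs_eq ha1] at hl
    subst hl
    exact ⟨l, rootPerm a, hQ.2.2.2 l rfl, hQ.coe_eq_genAct⟩

theorem genPerm_mem_hanoiSet_one {l : Fin k} {σ : Equiv.Perm (Fin k)} (hσ : σ l = l)
    (hσ1 : σ ≠ 1) : genPerm l σ hσ ∈ hanoiSet k 1 := by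
  have hne : genPerm l σ hσ ≠ 1 := by
    obtain ⟨i, hi⟩ : ∃ i, σ i ≠ i := by
      by_contra! h
      exact hσ1 (Equiv.ext h)
    have hil : i ≠ l := by
      rintro rfl
      exact hi hσ
    intro h1
    have h := congrArg (· [i]) h1
    simp only [genPerm_apply, genAct_cons, if_neg hil, Equiv.Perm.coe_one, id_eq] at h
    exact hi (List.cons_eq_cons.mp h).1
  refine ⟨⟨{l}, isHanoiWith_genPerm l σ hσ⟩, ?_⟩
  rw [(isHanoiWith_genPerm l σ hσ).inactivePegs_eq hne, Set.ncard_singleton]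

end HanoiSet

/-- A word in the generators of `H_c^{(k)}`: the pair `(l, σ)` stands for the generator
`genAct l σ`, and the list is read as a product, so its head acts last. -/
abbrev GenList (k : ℕ) := List (Fin k × Equiv.Perm (Fin k))

namespace GenList

variable {k : ℕ}

def Valid (L : GenList k) : Prop := ∀ p ∈ L, p.2 p.1 = p.1

def act (L : GenList k) (w : Word k) : Word k := L.foldr (fun p u => genAct p.1 p.2 u) w

def perm (L : GenList k) : Equiv.Perm (Fin k) := (L.map Prod.snd).prod

/-- The section of the product `L` at the letter `x`: the subproduct of those factors whose
inactive peg is the letter they read, namely the image of `x` under the factors after them. -/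
def secAt : GenList k → Fin k → GenList k
  | [], _ => []
  | p :: L, x => if perm L x = p.1 then p :: secAt L x else secAt L x

def secAlong (L : GenList k) (v : Word k) : GenList k := v.foldl secAt L

def inv (L : GenList k) : GenList k := (L.map fun p => (p.1, p.2⁻¹)).reverse

theorem Valid.sublist {L L' : GenList k} (hL : Valid L) (h : L'.Sublist L) : Valid L' :=
  fun p hp => hL p (h.subset hp)

theorem Valid.of_cons {p} {L : GenList k} (hL : Valid (p :: L)) : Valid L :=
  hL.sublist (List.sublist_cons_self p L)

theorem act_cons (p : Fin k × Equiv.Perm (Fin k)) (L : GenList k) (w : Word k) :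
    act (p :: L) w = genAct p.1 p.2 (act L w) := rfl

theorem act_append (L₁ L₂ : GenList k) (w : Word k) :
    act (L₁ ++ L₂) w = act L₁ (act L₂ w) := List.foldr_append ..

theorem perm_cons (p : Fin k × Equiv.Perm (Fin k)) (L : GenList k) :
    perm (p :: L) = p.2 * perm L := by
  rw [perm, List.map_cons, List.prod_cons, perm]

theorem perm_apply_of_pegs_eq {L : GenList k} (hL : Valid L) {l : Fin k}
    (hl : ∀ p ∈ L, p.1 = l) : perm L l = l := by
  induction L with
  | nil => rfl
  | cons p L ih =>
    have hp : p.2 l = l := hl p List.mem_cons_self ▸ hL p List.mem_cons_self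
    rw [perm_cons, Equiv.Perm.mul_apply,
      ih hL.of_cons fun q hq => hl q (List.mem_cons_of_mem p hq), hp]

theorem act_eq_genAct {L : GenList k} (hL : Valid L) {l : Fin k} (hl : ∀ p ∈ L, p.1 = l) :
    act L = genAct l (perm L) := by
  induction L with
  | nil => exact (genAct_one l).symm
  | cons p L ih =>
    have hlL : ∀ q ∈ L, q.1 = l := fun q hq => hl q (List.mem_cons_of_mem p hq)
    funext w
    rw [act_cons, ih hL.of_cons hlL, hl p List.mem_cons_self,
      genAct_genAct _ (perm_apply_of_pegs_eq hL.of_cons hlL), perm_cons]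

theorem act_letter {L : GenList k} (hL : Valid L) (x : Fin k) (w : Word k) :
    act L (x :: w) = perm L x :: act (secAt L x) w := by
  induction L with
  | nil => rfl
  | cons p L ih =>
    rw [act_cons, ih hL.of_cons, genAct_cons, perm_cons, Equiv.Perm.mul_apply, secAt]
    split_ifs with h
    · rw [act_cons, h, hL p List.mem_cons_self]
    · rfl

theorem secAt_sublist : ∀ (L : GenList k) (x : Fin k), (secAt L x).Sublist L
  | [], _ => List.Sublist.slnil
  | p :: L, x => by
    rw [secAt]
    split_ifs
    · exact (secAt_sublist L x).cons_cons p
    · exact (secAt_sublist L x).cons p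

theorem secAlong_cons (L : GenList k) (a : Fin k) (v : Word k) :
    secAlong L (a :: v) = secAlong (secAt L a) v := rfl

theorem secAlong_sublist (L : GenList k) (v : Word k) : (secAlong L v).Sublist L := by
  induction v generalizing L with
  | nil => exact List.Sublist.refl L
  | cons a v ih => exact (ih (secAt L a)).trans (secAt_sublist L a)

theorem drop_act_append {L : GenList k} (hL : Valid L) (v w : Word k) :
    (act L (v ++ w)).drop v.length = act (secAlong L v) w := by
  induction v generalizing L with
  | nil => rfl
  | cons a v ih =>
    rw [List.cons_append, act_letter hL, List.length_cons, List.drop_succ_cons, secAlong_cons]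
    exact ih (hL.sublist (secAt_sublist L a))

theorem act_inv_act {L : GenList k} (hL : Valid L) (w : Word k) : act L (act (inv L) w) = w := by
  induction L generalizing w with
  | nil => rfl
  | cons p L ih =>
    have hp : p.2 p.1 = p.1 := hL p List.mem_cons_self
    rw [inv, List.map_cons, List.reverse_cons, act_append, ← inv, act_cons, ih hL.of_cons,
      act_cons, genAct_genAct _ (Equiv.Perm.inv_eq_iff_eq.mpr hp.symm), mul_inv_cancel,
      genAct_one]
    rfl

theorem Valid.inv {L : GenList k} (hL : Valid L) : Valid (inv L) := by
  intro p hp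
  obtain ⟨q, hq, rfl⟩ := List.mem_map.mp (List.mem_reverse.mp hp)
  exact Equiv.Perm.inv_eq_iff_eq.mpr (hL q hq).symm

theorem pegs_eq_of_length_secAt {L : GenList k} (hL : Valid L) {a : Fin k}
    (h : (secAt L a).length = L.length) : ∀ p ∈ L, p.1 = a := by
  induction L with
  | nil => simp
  | cons p L ih =>
    rw [secAt] at h
    split_ifs at h with hp
    · have hL' := ih hL.of_cons (by simpa using h)
      rintro q (_ | ⟨_, hq⟩)
      · rw [← hp, perm_apply_of_pegs_eq hL.of_cons hL']
      · exact hL' q hq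
    · have := (secAt_sublist L a).length_le
      simp only [List.length_cons] at h
      omega

theorem secAt_of_pegs_eq {L : GenList k} (hL : Valid L) {c : Fin k} (hc : ∀ p ∈ L, p.1 = c)
    (b : Fin k) : secAt L b = if b = c then L else [] := by
  induction L with
  | nil => simp [secAt]
  | cons p L ih =>
    have hcL : ∀ q ∈ L, q.1 = c := fun q hq => hc q (List.mem_cons_of_mem p hq)
    have hfix := perm_apply_of_pegs_eq hL.of_cons hcL
    rw [secAt, ih hL.of_cons hcL, hc p List.mem_cons_self]
    by_cases hb : b = c
    · simp [hb, hfix]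
    · have : perm L b ≠ c := fun h => hb ((perm L).injective (h.trans hfix.symm))
      simp [hb, this]

theorem secAlong_of_pegs_eq {L : GenList k} (hL : Valid L) {c : Fin k}
    (hc : ∀ p ∈ L, p.1 = c) (v : Word k) (hv : secAlong L v ≠ []) :
    (∀ b ∈ v, b = c) ∧ secAlong L v = L := by
  induction v with
  | nil => exact ⟨by simp, rfl⟩
  | cons b v ih =>
    rw [secAlong_cons, secAt_of_pegs_eq hL hc] at hv ⊢
    by_cases hb : b = c
    · rw [if_pos hb] at hv ⊢
      exact ⟨List.forall_mem_cons.mpr ⟨hb, (ih hv).1⟩, (ih hv).2⟩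
    · rw [if_neg hb] at hv
      exact absurd (List.eq_nil_of_sublist_nil (secAlong_sublist [] v)) hv

/-- Along `v` the section can shrink at most `L.length` times. At the first step where it does
not shrink all its pegs equal the letter read, and from then on it survives only while the
letters stay equal to that peg. -/
theorem pegs_secAlong_eq {L : GenList k} (hL : Valid L) (v : Word k) (hv : secAlong L v ≠ []) :
    ∀ a ∈ v.drop L.length, ∀ p ∈ secAlong L v, p.1 = a := by
  induction v generalizing L with
  | nil => simp
  | cons b v ih =>
    rw [secAlong_cons] at hv ⊢
    intro a ha
    by_cases hlen : (secAt L b).length = L.length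
    · have hpegs := pegs_eq_of_length_secAt hL hlen
      have hsec : secAt L b = L := (secAt_sublist L b).eq_of_length hlen
      rw [hsec] at hv ⊢
      obtain ⟨hvb, hfix⟩ := secAlong_of_pegs_eq hL hpegs v hv
      rw [hfix]
      intro p hp
      have hab : a = b :=
        (List.forall_mem_cons.mpr ⟨rfl, hvb⟩ : ∀ c ∈ b :: v, c = b) a (List.mem_of_mem_drop ha)
      rw [hpegs p hp, hab]
    · have hlt : (secAt L b).length < L.length :=
        lt_of_le_of_ne (secAt_sublist L b).length_le hlen
      apply ih (hL.sublist (secAt_sublist L b)) hv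
      obtain ⟨n, hn⟩ : ∃ n, L.length = n + 1 := ⟨L.length - 1, by omega⟩
      rw [hn, List.drop_succ_cons] at ha
      exact (List.drop_subset_drop_left v (by omega : (secAt L b).length ≤ n)) ha

end GenList

section Closure

variable {k : ℕ}

theorem exists_genList_of_mem_closure {f : Equiv.Perm (Word k)}
    (hf : f ∈ Subgroup.closure (hanoiSet k 1 ∪ {1})) :
    ∃ L : GenList k, L.Valid ∧ ⇑f = L.act := by
  induction hf using Subgroup.closure_induction with
  | mem a ha =>
    rcases ha with ha | rfl
    · obtain ⟨l, σ, hσ, ha⟩ := exists_genAct_of_mem_hanoiSet_one ha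
      exact ⟨[(l, σ)], by simpa [GenList.Valid] using hσ, ha⟩
    · exact ⟨[], by simp [GenList.Valid], rfl⟩
  | one => exact ⟨[], by simp [GenList.Valid], rfl⟩
  | mul f g _ _ ihf ihg =>
    obtain ⟨Lf, hLf, hf⟩ := ihf
    obtain ⟨Lg, hLg, hg⟩ := ihg
    refine ⟨Lf ++ Lg, fun p hp => (List.mem_append.mp hp).elim (hLf p) (hLg p), ?_⟩
    funext w
    rw [Equiv.Perm.coe_mul, Function.comp_apply, hf, hg, GenList.act_append]
  | inv f _ ih =>
    obtain ⟨L, hL, hf⟩ := ih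
    refine ⟨L.inv, hL.inv, funext fun w => ?_⟩
    rw [Equiv.Perm.inv_eq_iff_eq, hf, GenList.act_inv_act hL]

theorem exists_bounded_genList {g : ℕ → Equiv.Perm (Word k)}
    (hg : ∀ m, g m ∈ Subgroup.closure (hanoiSet k 1 ∪ {1})) (hfin : (Set.range g).Finite) :
    ∃ (N : ℕ) (L : ℕ → GenList k), ∀ m, (L m).Valid ∧ (L m).length ≤ N ∧ ⇑(g m) = (L m).act := by
  choose R hR using fun f : Equiv.Perm (Word k) =>
    (em (f ∈ Subgroup.closure (hanoiSet k 1 ∪ {1}))).elim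
      (fun hf => (exists_genList_of_mem_closure hf).imp fun _ h _ => h)
      (fun hf => ⟨[], fun h => absurd h hf⟩)
  obtain ⟨N, hN⟩ := (hfin.image fun f => (R f).length).bddAbove
  exact ⟨N, fun m => R (g m), fun m =>
    ⟨(hR _ (hg m)).1, hN ⟨g m, Set.mem_range_self m, rfl⟩, (hR _ (hg m)).2⟩⟩

end Closure

section Sequences

variable {k : ℕ}

theorem wordOf_succ (x : ℕ → Fin k) (m : ℕ) : wordOf x (m + 1) = x m :: wordOf x m := by
  rw [wordOf, wordOf, List.range_succ, List.reverse_append]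
  rfl

theorem length_wordOf (x : ℕ → Fin k) (m : ℕ) : (wordOf x m).length = m := by
  simp [wordOf]

theorem wordOf_eq_wordOf_iff (x y : ℕ → Fin k) :
    ∀ m, wordOf x m = wordOf y m ↔ ∀ s < m, x s = y s
  | 0 => by simp [wordOf]
  | m + 1 => by
    rw [wordOf_succ, wordOf_succ, List.cons_eq_cons, wordOf_eq_wordOf_iff x y m,
      Nat.forall_lt_succ_right, and_comm]

theorem drop_wordOf (x : ℕ → Fin k) : ∀ n m, (wordOf x m).drop n = wordOf x (m - n)
  | 0, m => rfl
  | n + 1, 0 => by simp [wordOf]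
  | n + 1, m + 1 => by
    rw [wordOf_succ, List.drop_succ_cons, drop_wordOf x n m, Nat.add_sub_add_right]

theorem mem_take_wordOf (x : ℕ → Fin k) {s u m : ℕ} (hsu : s ≤ u) (hum : u < m) :
    x u ∈ (wordOf x m).take (m - s) := by
  induction m with
  | zero => omega
  | succ m ih =>
    rw [wordOf_succ, Nat.sub_add_comm (hsu.trans (Nat.lt_succ_iff.mp hum)), List.take_succ_cons]
    rcases Nat.lt_succ_iff_lt_or_eq.mp hum with hum | rfl
    · exact List.mem_cons_of_mem _ (ih hum)
    · exact List.mem_cons_self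

/-- `σ` is the root permutation of the section at `x_m … x_{s+1}`, all of whose inactive pegs
equal `x_{s+1}`. -/
theorem GenList.exists_genAct_of_act_wordOf {L : GenList k} (hL : L.Valid)
    {x y : ℕ → Fin k} {s m : ℕ} (hm : s + L.length < m) (hxy : wordOf x s ≠ wordOf y s)
    (hact : L.act (wordOf x m) = wordOf y m) :
    ∃ σ : Equiv.Perm (Fin k), σ (x s) = x s ∧ genAct (x s) σ (wordOf x s) = wordOf y s ∧
      ∀ u, s ≤ u → u + L.length < m → x u = x s := by
  set v := (wordOf x m).take (m - s)
  have hvlen : v.length = m - s := by rw [List.length_take, length_wordOf]; omega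
  have hsplit : wordOf x m = v ++ wordOf x s := by
    rw [← List.take_append_drop (m - s) (wordOf x m), drop_wordOf,
      Nat.sub_sub_self (by omega : s ≤ m)]
  have hsec : (L.secAlong v).act (wordOf x s) = wordOf y s := by
    have h := GenList.drop_act_append hL v (wordOf x s)
    rw [← hsplit, hact, hvlen, drop_wordOf, Nat.sub_sub_self (by omega : s ≤ m)] at h
    exact h.symm
  have hne : L.secAlong v ≠ [] := fun h => hxy (by rw [← hsec, h]; rfl)
  have hpegs : ∀ u, s ≤ u → u + L.length < m → ∀ p ∈ L.secAlong v, p.1 = x u := by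
    intro u hsu hum
    apply GenList.pegs_secAlong_eq hL v hne
    rw [List.drop_take, drop_wordOf, show m - s - L.length = m - L.length - s by omega]
    exact mem_take_wordOf x hsu (by omega)
  obtain ⟨p, hp⟩ := List.exists_mem_of_ne_nil _ hne
  have hJ := hL.sublist (GenList.secAlong_sublist L v)
  refine ⟨(L.secAlong v).perm, GenList.perm_apply_of_pegs_eq hJ (hpegs s le_rfl (by omega)),
    by rwa [← GenList.act_eq_genAct hJ (hpegs s le_rfl (by omega))], fun u hsu hum => ?_⟩
  rw [← hpegs u hsu hum p hp, hpegs s le_rfl (by omega) p hp]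

theorem pattern_of_genAct_wordOf_eq {l : Fin k} {σ : Equiv.Perm (Fin k)} (hσ : σ l = l)
    {x y : ℕ → Fin k} {d s : ℕ} (hds : d < s) (hd : x d ≠ y d)
    (hxl : ∀ u, d < u → u < s → x u = l) (h : genAct l σ (wordOf x s) = wordOf y s) :
    x d ≠ l ∧ y d ≠ l ∧ (∀ u < d, x u = y u) ∧ ∀ u, d < u → u < s → y u = l := by
  induction s, hds using Nat.le_induction with
  | base =>
    rw [wordOf_succ, wordOf_succ, genAct_cons] at h
    split_ifs at h with hdl
    · exact absurd (List.cons_eq_cons.mp h).1 hd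
    · obtain ⟨hy, hxy⟩ := List.cons_eq_cons.mp h
      refine ⟨hdl, fun hyl => hdl (σ.injective ?_), (wordOf_eq_wordOf_iff x y d).mp hxy,
        fun u hu hu' => absurd hu' (by omega)⟩
      rw [hy, hyl, hσ]
  | succ s hs ih =>
    rw [wordOf_succ, wordOf_succ, genAct_cons, if_pos (hxl s hs (Nat.lt_succ_self s))] at h
    obtain ⟨hy, hrest⟩ := List.cons_eq_cons.mp h
    obtain ⟨h1, h2, h3, h4⟩ := ih (fun u hu hu' => hxl u hu (hu'.trans (Nat.lt_succ_self s))) hrest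
    refine ⟨h1, h2, h3, fun u hu hu' => ?_⟩
    rcases Nat.lt_succ_iff_lt_or_eq.mp hu' with hu' | rfl
    · exact h4 u hu hu'
    · rw [← hy, hxl u hu (Nat.lt_succ_self u)]

end Sequences

section Pattern

variable {k : ℕ}

theorem exists_pattern_of_act_wordOf {N : ℕ} {L : ℕ → GenList k}
    (hL : ∀ m, (L m).Valid ∧ (L m).length ≤ N) {x y : ℕ → Fin k} (hxy : x ≠ y)
    (hact : ∀ m, 1 ≤ m → (L m).act (wordOf x m) = wordOf y m) :
    ∃ i j l : Fin k, i ≠ j ∧ i ≠ l ∧ j ≠ l ∧ ∃ r : ℕ,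
      (∀ s, s < r → x s = y s) ∧ ({x r, y r} : Set (Fin k)) = {i, j} ∧
      ∀ s, r + 1 ≤ s → x s = l ∧ y s = l := by
  obtain ⟨d, hd⟩ := Function.ne_iff.mp hxy
  have key : ∀ s u, d < s → s ≤ u → ∃ σ : Equiv.Perm (Fin k), σ (x s) = x s ∧
      genAct (x s) σ (wordOf x s) = wordOf y s ∧ x u = x s := by
    intro s u hds hsu
    have hN := (hL (u + N + 1)).2
    obtain ⟨σ, hσ, hgen, htail⟩ := GenList.exists_genAct_of_act_wordOf (hL (u + N + 1)).1
      (by omega) (fun h => hd ((wordOf_eq_wordOf_iff x y s).mp h d hds)) (hact _ (by omega))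
    exact ⟨σ, hσ, hgen, htail u hsu (by omega)⟩
  set l := x (d + 1)
  have hxl : ∀ u, d < u → x u = l := fun u hu => (key (d + 1) u (by omega) hu).choose_spec.2.2
  have hpat : ∀ s, d < s →
      x d ≠ l ∧ y d ≠ l ∧ (∀ u < d, x u = y u) ∧ ∀ u, d < u → u < s → y u = l := by
    intro s hds
    obtain ⟨σ, hσ, hgen, -⟩ := key s s hds le_rfl
    rw [hxl s hds] at hσ hgen
    exact pattern_of_genAct_wordOf_eq hσ hds hd (fun u hu _ => hxl u hu) hgen
  obtain ⟨hxd, hyd, hlow, -⟩ := hpat (d + 1) (by omega)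
  exact ⟨x d, y d, l, hd, hxd, hyd, d, hlow, rfl, fun s hs =>
    ⟨hxl s (by omega), (hpat (s + 1) (by omega)).2.2.2 s (by omega) (by omega)⟩⟩

theorem genAct_swap_wordOf {i j l : Fin k} (hil : i ≠ l) (hjl : j ≠ l) {x y : ℕ → Fin k}
    {r : ℕ} (hlow : ∀ s, s < r → x s = y s) (hset : ({x r, y r} : Set (Fin k)) = {i, j})
    (hhigh : ∀ s, r + 1 ≤ s → x s = l ∧ y s = l) {m : ℕ} (hm : r < m) :
    genAct l (Equiv.swap i j) (wordOf x m) = wordOf y m := by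
  induction m, hm using Nat.le_induction with
  | base =>
    have hxr : x r ≠ l ∧ Equiv.swap i j (x r) = y r := by
      rcases Set.pair_eq_pair_iff.mp hset with ⟨hx, hy⟩ | ⟨hx, hy⟩
      · exact ⟨hx ▸ hil, by rw [hx, hy, Equiv.swap_apply_left]⟩
      · exact ⟨hx ▸ hjl, by rw [hx, hy, Equiv.swap_apply_right]⟩
    rw [wordOf_succ, wordOf_succ, genAct_cons, if_neg hxr.1, hxr.2,
      (wordOf_eq_wordOf_iff x y r).mpr hlow]
  | succ m hm ih =>
    obtain ⟨hx, hy⟩ := hhigh m hm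
    rw [wordOf_succ, wordOf_succ, genAct_cons, if_pos hx, ih, hx, hy]

end Pattern

theorem asymptotic_equivalence_Hc_general {k : ℕ}
    (x y : ℕ → Fin k) (hxy : x ≠ y) :
    (∃ g : ℕ → Equiv.Perm (Word k),
      (∀ m, g m ∈ Subgroup.closure (hanoiSet k 1 ∪ {1})) ∧
      (Set.range g).Finite ∧
      ∀ m, 1 ≤ m → g m (wordOf x m) = wordOf y m) ↔
    (∃ i j l : Fin k, i ≠ j ∧ i ≠ l ∧ j ≠ l ∧ ∃ r : ℕ,
      (∀ s, s < r → x s = y s) ∧ ({x r, y r} : Set (Fin k)) = {i, j} ∧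
      ∀ s, r + 1 ≤ s → x s = l ∧ y s = l) := by
  constructor
  · rintro ⟨g, hg, hfin, hact⟩
    obtain ⟨N, L, hL⟩ := exists_bounded_genList hg hfin
    exact exists_pattern_of_act_wordOf (fun m => ⟨(hL m).1, (hL m).2.1⟩) hxy
      fun m hm => (hL m).2.2 ▸ hact m hm
  · rintro ⟨i, j, l, hij, hil, hjl, r, hlow, hset, hhigh⟩
    have hσ : Equiv.swap i j l = l := Equiv.swap_apply_of_ne_of_ne hil.symm hjl.symm
    set a := genPerm l (Equiv.swap i j) hσ
    refine ⟨fun m => if m ≤ r then 1 else a, fun m => ?_, ?_, fun m _ => ?_⟩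
    · dsimp only
      split_ifs
      · exact one_mem _
      · exact Subgroup.subset_closure
          (Or.inl (genPerm_mem_hanoiSet_one hσ (Equiv.swap_eq_one_iff.not.mpr hij)))
    · refine (Set.toFinite {1, a}).subset (Set.range_subset_iff.mpr fun m => ?_)
      split_ifs <;> simp
    · dsimp only
      split_ifs with hmr
      · exact (wordOf_eq_wordOf_iff x y m).mpr fun s hs => hlow s (by omega)
      · exact genAct_swap_wordOf hil hjl hlow hset hhigh (by omega)

/-- asymptotic equivalence for `H_c^{(k)}`.
Two distinct left-infinite sequences `… x_2 x_1` and `… y_2 y_1` (encoded as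
`x y : ℕ → Fin k` with `x s = x_{s+1}`) are asymptotically equivalent with
respect to `H_c^{(k)}` if and only if there are pairwise distinct letters
`i, j, l` and `r ≥ 0` with `x_s = y_s` for `s ≤ r`,
`{x_{r+1}, y_{r+1}} = {i, j}` and `x_s = y_s = l` for `s ≥ r + 2`. -/
theorem asymptotic_equivalence_Hc {k : ℕ} (hk : 3 ≤ k)
    (x y : ℕ → Fin k) (hxy : x ≠ y) :
    (∃ g : ℕ → Equiv.Perm (Word k),
      (∀ m, g m ∈ Subgroup.closure (hanoiSet k 1 ∪ {1})) ∧
      (Set.range g).Finite ∧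
      ∀ m, 1 ≤ m → g m (wordOf x m) = wordOf y m) ↔
    (∃ i j l : Fin k, i ≠ j ∧ i ≠ l ∧ j ≠ l ∧ ∃ r : ℕ,
      (∀ s, s < r → x s = y s) ∧ ({x r, y r} : Set (Fin k)) = {i, j} ∧
      ∀ s, r + 1 ≤ s → x s = l ∧ y s = l) :=
  asymptotic_equivalence_Hc_general x y hxy

end Hanoi
end
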